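/- arXiv:2210.08069 — 5 statements merged into one kernel-verified Lean document; each statement's English description precedes it below -/
import Mathlib

section
/- For every vertex v of a zonotope Z(c,E) ⊆ ℝ^d with m generators, the preimage set {y ∈ [-1,1]^m : c + Ey = v} is a face of the cube [-1,1]^m. -/
open Matrix Set

/-- The zonotope `Z(c,E) = {c + E y : y ∈ [-1,1]^m}`. -/
def zono {d m : ℕ} (c : Fin d → ℝ) (E : Matrix (Fin d) (Fin m) ℝ) : Set (Fin d → ℝ) :=
  {x | ∃ y : Fin m → ℝ, (∀ j, |y j| ≤ 1) ∧ x = c + E.mulVec y}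

/-- For every vertex `v` of the zonotope `Z(c,E)` (a point uniquely minimizing some
linear functional over `Z(c,E)`), the preimage set `{y ∈ [-1,1]^m : c + E y = v}` is a
face of the cube `[-1,1]^m`, i.e. the set of minimizers of some linear functional over
the cube. -/
theorem zono_vertex_preimage_is_cube_face {d m : ℕ} (c : Fin d → ℝ)
    (E : Matrix (Fin d) (Fin m) ℝ) (v : Fin d → ℝ)
    (hv : v ∈ zono c E)
    (hvert : ∃ a : Fin d → ℝ, ∀ z ∈ zono c E, z ≠ v → a ⬝ᵥ v < a ⬝ᵥ z) :
    ∃ b : Fin m → ℝ,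
      {y : Fin m → ℝ | (∀ j, |y j| ≤ 1) ∧ c + E.mulVec y = v} =
        {y : Fin m → ℝ | (∀ j, |y j| ≤ 1) ∧
          ∀ y' : Fin m → ℝ, (∀ j, |y' j| ≤ 1) → b ⬝ᵥ y ≤ b ⬝ᵥ y'} := by
  obtain ⟨a, ha⟩ := hvert
  refine ⟨Matrix.vecMul a E, Set.ext fun y => ?_⟩
  simp only [Set.mem_setOf_eq]
  constructor
  · rintro ⟨hy, hyv⟩
    refine ⟨hy, fun y' hy' => ?_⟩
    have hz : c + E.mulVec y' ∈ zono c E := ⟨y', hy', rfl⟩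
    by_cases hne : c + E.mulVec y' = v
    · have : a ⬝ᵥ (c + E.mulVec y') = a ⬝ᵥ (c + E.mulVec y) := by rw [hne, hyv]
      simp only [dotProduct_add, Matrix.dotProduct_mulVec] at this
      linarith
    · have := ha _ hz hne
      rw [← hyv] at this
      simp only [dotProduct_add, Matrix.dotProduct_mulVec] at this
      linarith
  · rintro ⟨hy, hmin⟩
    refine ⟨hy, ?_⟩
    obtain ⟨y₀, hy₀, hvy₀⟩ := hv
    have hle : Matrix.vecMul a E ⬝ᵥ y ≤ Matrix.vecMul a E ⬝ᵥ y₀ := hmin y₀ hy₀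
    by_contra hne
    have := ha _ ⟨y, hy, rfl⟩ hne
    rw [hvy₀] at this
    simp only [dotProduct_add, Matrix.dotProduct_mulVec] at this
    linarith
end

section
/- For any zonotope Z = Z(c,E), any partition S₁,…,Sₙ of coordinates, and the relaxed set Ẑ = ⨁_j π_j(Z), the containment Z ⊆ Ẑ ⊆ H holds, where H is the smallest hyperbox containing Z, i.e. the partition-based relaxation is always at least as tight as the hyperbox relaxation. -/
open Matrix Set Pointwise

/-- The coordinate projection associated with `S ⊆ {1,…,d}`: zero out all
coordinates outside `S`. -/
def coordProj {d : ℕ} (S : Finset (Fin d)) (z : Fin d → ℝ) : Fin d → ℝ :=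
  fun i => if i ∈ S then z i else 0

lemma zono_coord_bound {d m : ℕ} (c : Fin d → ℝ) (E : Matrix (Fin d) (Fin m) ℝ)
    {x : Fin d → ℝ} (hx : x ∈ zono c E) (i : Fin d) :
    c i - ∑ k, |E i k| ≤ x i ∧ x i ≤ c i + ∑ k, |E i k| := by
  obtain ⟨y, hy, rfl⟩ := hx
  have h : |(E.mulVec y) i| ≤ ∑ k, |E i k| := by
    simp only [Matrix.mulVec, dotProduct, Pi.add_apply]
    calc |∑ k, E i k * y k| ≤ ∑ k, |E i k * y k| := Finset.abs_sum_le_sum_abs _ _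
    _ ≤ ∑ k, |E i k| := by
        apply Finset.sum_le_sum
        intro k _
        rw [abs_mul]
        calc |E i k| * |y k| ≤ |E i k| * 1 :=
              mul_le_mul_of_nonneg_left (hy k) (abs_nonneg _)
        _ = |E i k| := mul_one _
  rw [abs_le] at h
  constructor <;> simp only [Pi.add_apply] <;> linarith [h.1, h.2]

lemma zono_bddBelow {d m : ℕ} (c : Fin d → ℝ) (E : Matrix (Fin d) (Fin m) ℝ) (i : Fin d) :
    BddBelow ((fun z => z i) '' zono c E) := by
  refine ⟨c i - ∑ k, |E i k|, ?_⟩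
  rintro t ⟨z, hz, rfl⟩
  exact (zono_coord_bound c E hz i).1

lemma zono_bddAbove {d m : ℕ} (c : Fin d → ℝ) (E : Matrix (Fin d) (Fin m) ℝ) (i : Fin d) :
    BddAbove ((fun z => z i) '' zono c E) := by
  refine ⟨c i + ∑ k, |E i k|, ?_⟩
  rintro t ⟨z, hz, rfl⟩
  exact (zono_coord_bound c E hz i).2

/-- For any zonotope `Z`, partition `S₁,…,Sₙ` of coordinates and the relaxed set
`Ẑ = ⨁_j π_j(Z)`, we have `Z ⊆ Ẑ ⊆ H` where `H` is the smallest hyperbox containing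
`Z`: the partition-based relaxation is at least as tight as the hyperbox relaxation. -/
theorem partition_relaxation_between_zono_and_box {d m n : ℕ}
    (c : Fin d → ℝ) (E : Matrix (Fin d) (Fin m) ℝ)
    (S : Fin n → Finset (Fin d))
    (hdisj : ∀ j k, j ≠ k → Disjoint (S j) (S k))
    (hcover : ∀ i, ∃ j, i ∈ S j) :
    zono c E ⊆ ∑ j : Fin n, coordProj (S j) '' zono c E ∧
    (∑ j : Fin n, coordProj (S j) '' zono c E) ⊆
      {x : Fin d → ℝ | ∀ i,
        x i ∈ Set.Icc (sInf ((fun z => z i) '' zono c E)) (sSup ((fun z => z i) '' zono c E))} := by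
  classical
  constructor
  · intro x hx
    rw [Set.mem_finset_sum]
    refine ⟨fun j => coordProj (S j) x, fun {j} _ => ⟨x, hx, rfl⟩, ?_⟩
    funext i
    obtain ⟨j₀, hj₀⟩ := hcover i
    rw [Finset.sum_apply]
    rw [Finset.sum_eq_single j₀]
    · simp [coordProj, hj₀]
    · intro j _ hj
      have : i ∉ S j := fun hi => Finset.disjoint_left.mp (hdisj j j₀ hj) hi hj₀
      simp [coordProj, this]
    · simp
  · intro x hx
    rw [Set.mem_finset_sum] at hx
    obtain ⟨g, hg, rfl⟩ := hx
    intro i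
    obtain ⟨j₀, hj₀⟩ := hcover i
    choose z hz hgz using fun j => hg (Finset.mem_univ j)
    have hsum : (∑ j : Fin n, g j) i = z j₀ i := by
      rw [Finset.sum_apply, Finset.sum_eq_single j₀]
      · rw [← hgz j₀]; simp [coordProj, hj₀]
      · intro j _ hj
        have : i ∉ S j := fun hi => Finset.disjoint_left.mp (hdisj j j₀ hj) hi hj₀
        rw [← hgz j]; simp [coordProj, this]
      · simp
    rw [hsum]
    exact ⟨csInf_le (zono_bddBelow c E i) ⟨z j₀, hz j₀, rfl⟩,
      le_csSup (zono_bddAbove c E i) ⟨z j₀, hz j₀, rfl⟩⟩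
end

section
/- Any ReLU program min_{z∈Z(c,E)} c₁^⊤z + c₂^⊤σ(z) over a zonotope with m generators equals the verification problem min_{y∈[-1,1]^m} w₂^⊤σ(W₁y + b) for the 2-layer ReLU network with W₁ = [E; −E], b = [c; −c], and w₂ = [c₁+c₂; −c₁]. -/
open Matrix Set

/-- Elementwise ReLU. -/
def relu {ι : Type*} (z : ι → ℝ) : ι → ℝ := fun i => max (z i) 0

/-- Any ReLU program `min_{z ∈ Z(c,E)} c₁ᵀz + c₂ᵀσ(z)` over a zonotope with `m`
generators equals the verification problem `min_{y ∈ [-1,1]^m} w₂ᵀ σ(W₁ y + b)` of the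
2-layer ReLU network with `W₁ = [E; -E]`, `b = [c; -c]` and `w₂ = [c₁+c₂; -c₁]`. -/
theorem relu_program_eq_two_layer_verification {d m : ℕ} (c c₁ c₂ : Fin d → ℝ)
    (E : Matrix (Fin d) (Fin m) ℝ) :
    sInf ((fun z => c₁ ⬝ᵥ z + c₂ ⬝ᵥ relu z) '' zono c E) =
      sInf ((fun y => (Sum.elim (c₁ + c₂) (-c₁)) ⬝ᵥ
          relu ((Matrix.fromRows E (-E)).mulVec y + Sum.elim c (-c))) ''
        {y : Fin m → ℝ | ∀ j, |y j| ≤ 1}) := by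
  congr 1
  have hzono : zono c E = (fun y => c + E.mulVec y) '' {y : Fin m → ℝ | ∀ j, |y j| ≤ 1} := by
    ext x
    constructor
    · rintro ⟨y, hy, rfl⟩; exact ⟨y, hy, rfl⟩
    · rintro ⟨y, hy, rfl⟩; exact ⟨y, hy, rfl⟩
  rw [hzono, ← Set.image_comp]
  apply Set.image_congr
  intro y _
  set z : Fin d → ℝ := c + E.mulVec y with hz
  have harg : (Matrix.fromRows E (-E)).mulVec y + Sum.elim c (-c) = Sum.elim z (-z) := by
    rw [Matrix.fromRows_mulVec]
    funext i
    cases i with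
    | inl i => simp [z, Matrix.mulVec, add_comm]
    | inr i => simp [z, Matrix.mulVec, Matrix.neg_apply, dotProduct, Finset.sum_neg_distrib,
        neg_add, add_comm]
  simp only [Function.comp_apply, harg]
  have hrelu : relu (Sum.elim z (-z)) = Sum.elim (relu z) (relu (-z)) := by
    funext i; cases i <;> rfl
  rw [hrelu, sumElim_dotProduct_sumElim]
  simp only [dotProduct, Pi.add_apply, Pi.neg_apply, relu]
  rw [← Finset.sum_add_distrib, ← Finset.sum_add_distrib]
  apply Finset.sum_congr rfl
  intro i _
  have h := max_zero_sub_max_neg_zero_eq_self (z i)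
  have hzi : c i + (E *ᵥ y) i = z i := rfl
  rw [hzi]
  linear_combination -(c₁ i) * h
end

section
/- For the ReLU over an interval [l,u] with l < 0 < u, the choice λ = u/(u−l) minimizes over λ ∈ ℝ the quantity max_{z∈[l,u]} |σ(z) − λz − b| minimized over offsets b, and the resulting optimal error value is −lu/(2(u−l)). -/
open Set

/-- The worst-case error of approximating the ReLU on `[l,u]` by the affine map
`z ↦ λ z + b`. -/
noncomputable def reluErr (l u lam b : ℝ) : ℝ :=
  sSup ((fun z => |max z 0 - lam * z - b|) '' Set.Icc l u)

lemma reluCont (lam b : ℝ) : Continuous (fun z : ℝ => |max z 0 - lam * z - b|) := by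
  fun_prop

/-- For the ReLU over `[l,u]` with `l < 0 < u`, the slope `λ = u/(u-l)` (with the best
offset `b`) minimizes the worst-case error `min_b max_{z∈[l,u]} |σ(z) - λz - b|`, and the
optimal error value is `-lu/(2(u-l))`. -/
theorem deepZ_slope_optimal (l u : ℝ) (hl : l < 0) (hu : 0 < u) :
    (∃ b : ℝ, reluErr l u (u / (u - l)) b = -(l * u) / (2 * (u - l))) ∧
    (∀ lam b : ℝ, -(l * u) / (2 * (u - l)) ≤ reluErr l u lam b) := by
  have hd : (0:ℝ) < u - l := by linarith
  have hd' : u - l ≠ 0 := ne_of_gt hd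
  set ε := -(l * u) / (2 * (u - l)) with hε
  have hεpos : 0 < ε := by
    apply div_pos (by nlinarith) (by linarith)
  have hle : l ≤ u := by linarith
  have hne : (Set.Icc l u).Nonempty := ⟨0, by constructor <;> linarith⟩
  set lam0 := u / (u - l) with hlam0
  have hlampos : 0 < lam0 := div_pos hu hd
  have h2ε : lam0 * (-l) = 2 * ε := by
    rw [hlam0, hε]; field_simp
  have h1lam : (1 - lam0) * u = 2 * ε := by
    rw [hlam0, hε]; field_simp; ring
  constructor
  · refine ⟨ε, ?_⟩
    have hbdd : BddAbove ((fun z => |max z 0 - lam0 * z - ε|) '' Set.Icc l u) :=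
      (isCompact_Icc.image (reluCont _ _)).bddAbove
    apply le_antisymm
    · apply csSup_le (hne.image _)
      rintro x ⟨z, hz, rfl⟩
      simp only
      rw [abs_le]
      rcases le_or_gt z 0 with h0 | h0
      · rw [max_eq_right h0]
        constructor
        · nlinarith [mul_nonpos_of_nonneg_of_nonpos hlampos.le h0]
        · nlinarith [mul_le_mul_of_nonneg_left (neg_le_neg hz.1) hlampos.le]
      · rw [max_eq_left h0.le]
        have h1l : 0 ≤ 1 - lam0 := by
          rw [hlam0, sub_nonneg, div_le_one hd]; linarith
        constructor
        · nlinarith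
        · nlinarith [mul_le_mul_of_nonneg_left hz.2 h1l]
    · apply le_csSup hbdd
      refine ⟨l, ⟨le_refl l, hle⟩, ?_⟩
      simp only
      rw [max_eq_right hl.le]
      have : (0:ℝ) - lam0 * l - ε = ε := by nlinarith
      rw [this, abs_of_pos hεpos]
  · intro lam b
    have hbdd : BddAbove ((fun z => |max z 0 - lam * z - b|) '' Set.Icc l u) :=
      (isCompact_Icc.image (reluCont _ _)).bddAbove
    have hA : |max l 0 - lam * l - b| ≤ reluErr l u lam b :=
      le_csSup hbdd ⟨l, ⟨le_refl l, hle⟩, rfl⟩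
    have hB : |max u 0 - lam * u - b| ≤ reluErr l u lam b :=
      le_csSup hbdd ⟨u, ⟨hle, le_refl u⟩, rfl⟩
    have hC : |max (0:ℝ) 0 - lam * 0 - b| ≤ reluErr l u lam b :=
      le_csSup hbdd ⟨0, ⟨hl.le, hu.le⟩, rfl⟩
    rw [max_eq_right hl.le] at hA
    rw [max_eq_left hu.le] at hB
    have hC2 : |b| ≤ reluErr l u lam b := by simpa using hC
    rw [abs_le] at hA hB
    have hC' : -b ≤ |b| := neg_le_abs b
    have hC'' : b ≤ |b| := le_abs_self b
    rw [hε, div_le_iff₀ (by linarith : (0:ℝ) < 2 * (u - l))]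
    nlinarith [hA.1, hA.2, hB.1, hB.2, mul_le_mul_of_nonneg_left hA.2 hu.le,
      mul_le_mul_of_nonneg_left hB.2 (by linarith : (0:ℝ) ≤ -l),
      mul_le_mul_of_nonneg_left (le_trans hC'' hC2) (by linarith : (0:ℝ) ≤ u - l)]
end

section
/- Let [l,u] with l < 0 < u, λ = u/(u−l), and β = −lu/(2(u−l)). Then for all z ∈ [l,u], |σ(z) − λz − β| ≤ β; equivalently, σ(z) ∈ [λz, λz + 2β], so the DeepZ single-coordinate relaxation is sound. -/
open Set

/-! The line `λz` lies below `σ` because `0 ≤ λ ≤ 1`, and the line `λz + 2β = λ(z - l)` is the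
chord of the convex function `σ` through `(l, 0)` and `(u, u)`, so it lies above `σ` on `[l, u]`.
The midline `λz + β` is then within `β` of `σ`. -/

lemma mul_le_max_zero {a z : ℝ} (ha₀ : 0 ≤ a) (ha₁ : a ≤ 1) : a * z ≤ max z 0 := by
  rcases le_total z 0 with hz | hz
  · exact (mul_nonpos_of_nonneg_of_nonpos ha₀ hz).trans (le_max_right z 0)
  · exact (mul_le_of_le_one_left hz ha₁).trans (le_max_left z 0)

lemma max_zero_le_chord {l u z : ℝ} (hl : l ≤ 0) (hu : 0 ≤ u) (hlu : l < u) (hz : z ∈ Icc l u) :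
    max z 0 ≤ u / (u - l) * (z - l) := by
  have hd : 0 < u - l := sub_pos.mpr hlu
  rw [div_mul_eq_mul_div, le_div_iff₀ hd]
  rcases le_total z 0 with h | h
  · rw [max_eq_right h]
    nlinarith [hz.1, hu]
  · rw [max_eq_left h]
    nlinarith [hz.2]

/-- Soundness of the DeepZ single-coordinate relaxation: with `λ = u/(u-l)` and
`β = -lu/(2(u-l))` over `[l,u]` with `l < 0 < u`, for every `z ∈ [l,u]` we have
`|σ(z) - λz - β| ≤ β`; equivalently `σ(z) ∈ [λz, λz + 2β]`. -/
theorem deepZ_relaxation_sound (l u : ℝ) (hl : l < 0) (hu : 0 < u) :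
    ∀ z ∈ Set.Icc l u,
      |max z 0 - (u / (u - l)) * z - (-(l * u) / (2 * (u - l)))| ≤ -(l * u) / (2 * (u - l)) ∧
      (u / (u - l)) * z ≤ max z 0 ∧
      max z 0 ≤ (u / (u - l)) * z + 2 * (-(l * u) / (2 * (u - l))) := by
  intro z hz
  have hd : 0 < u - l := by linarith
  have hchord : (u / (u - l)) * z + 2 * (-(l * u) / (2 * (u - l))) = u / (u - l) * (z - l) := by
    field_simp
    ring
  have lower : (u / (u - l)) * z ≤ max z 0 :=
    mul_le_max_zero (div_nonneg hu.le hd.le) ((div_le_one hd).mpr (by linarith))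
  have upper : max z 0 ≤ (u / (u - l)) * z + 2 * (-(l * u) / (2 * (u - l))) :=
    hchord ▸ max_zero_le_chord hl.le hu.le (hl.trans hu) hz
  exact ⟨abs_le.mpr ⟨by linarith, by linarith⟩, lower, upper⟩
end
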